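/- Full faithfulness criterion for the embedding of group operads (core of the theorem that Ψ̂ is fully faithful): let 𝒢 and ℋ be group operads and let fₙ : G n → H n (n ∈ ℕ) be a family of group homomorphisms such that (a) f(γ(x; e_{k₁}, …, e_{kₙ})) = γ(f x; e_{k₁}, …, e_{kₙ}) for all x ∈ G n and all k₁,…,kₙ, and (b) f(γ(e₃; e_p, x, e_q)) = γ(e₃; e_p, f x, e_q) for all p, q, k and x ∈ G k. Then f preserves all operadic compositions: f(γ(x; x₁, …, xₙ)) = γ(f x; f x₁, …, f xₙ) for all x ∈ G n and xᵢ ∈ G kᵢ. -/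

import Mathlib

/-- Splitting a sigma type over `Option`. -/
def sigmaOptionEquiv {γ : Type*} (β : Option γ → Type*) :
    (Σ o : Option γ, β o) ≃ (β none ⊕ Σ c : γ, β (some c)) where
  toFun := fun x => match x with
    | ⟨none, b⟩ => .inl b
    | ⟨some c, b⟩ => .inr ⟨c, b⟩
  invFun := fun x => match x with
    | .inl b => ⟨none, b⟩
    | .inr ⟨c, b⟩ => ⟨some c, b⟩
  left_inv := fun ⟨o, b⟩ => by cases o <;> rfl
  right_inv := fun x => by rcases x with b | ⟨c, b⟩ <;> rfl

/-- The order-preserving flattening equivalence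
`(Σ i : Fin n, Fin (k i)) ≃ Fin (∑ i, k i)`, listing the blocks in
increasing order of the index. -/
def orderedFinSigmaFinEquiv : {n : ℕ} → {k : Fin n → ℕ} → (Σ i : Fin n, Fin (k i)) ≃ Fin (∑ i, k i)
  | 0, k => ((Equiv.equivOfIsEmpty (Σ i : Fin 0, Fin (k i)) (Fin 0)).trans
      (finCongr (show 0 = ∑ i : Fin 0, k i by simp)))
  | (n+1), k =>
    ((Equiv.sigmaCongrLeft (β := fun i => Fin (k i)) (finSuccEquiv n).symm).symm.trans
      ((sigmaOptionEquiv fun o => Fin (k ((finSuccEquiv n).symm o))).trans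
        ((Equiv.sumCongr (finCongr (congrArg k (finSuccEquiv_symm_none)))
            ((Equiv.sigmaCongrRight fun c =>
                finCongr (congrArg k (finSuccEquiv_symm_some c))).trans
              orderedFinSigmaFinEquiv)).trans
          (finSumFinEquiv.trans (finCongr (Fin.sum_univ_succ k).symm)))))

/-- Block-permutation composition in the operad of symmetric groups. -/
def blockComp {n : ℕ} (k : Fin n → ℕ) (σ : Equiv.Perm (Fin n))
    (σs : ∀ i, Equiv.Perm (Fin (k i))) : Equiv.Perm (Fin (∑ i, k i)) :=
  orderedFinSigmaFinEquiv.symm.trans <|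
    (Equiv.sigmaCongr σ fun i =>
        (σs i).trans (finCongr (congrArg k (σ.symm_apply_apply i).symm))).trans <|
      orderedFinSigmaFinEquiv.trans (finCongr (Equiv.sum_comp σ.symm k))

theorem flatten_sum_eq {n : ℕ} (k : Fin n → ℕ) (l : ∀ i : Fin n, Fin (k i) → ℕ) :
    (∑ j : Fin (∑ i, k i), l (orderedFinSigmaFinEquiv.symm j).1 (orderedFinSigmaFinEquiv.symm j).2)
      = ∑ i, ∑ s, l i s := by
  rw [Fintype.sum_equiv orderedFinSigmaFinEquiv.symm _ (fun a => l a.1 a.2) (fun _ => rfl)]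
  rw [← Finset.univ_sigma_univ, Finset.sum_sigma]

/-- Transport an element of `G m` along an equality `m = n` of levels. -/
def gcast (G : ℕ → Type) {m n : ℕ} (h : m = n) (x : G m) : G n := h ▸ x

/-- A group operad: a planar operad `G` with a group structure on each level,
a map of operads `π` to the operad of symmetric groups which is a levelwise
group homomorphism, subject to the interchange law. -/
structure GroupOperad (G : ℕ → Type) [∀ n, Group (G n)] where
  /-- operadic composition -/
  γ : ∀ {n : ℕ} {k : Fin n → ℕ}, G n → (∀ i, G (k i)) → G (∑ i, k i)
  /-- the operad identity -/
  e : G 1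
  /-- the levelwise group homomorphisms to the symmetric groups -/
  π : ∀ {n : ℕ}, G n →* Equiv.Perm (Fin n)
  π_e : π e = 1
  γ_id : ∀ {n : ℕ} (x : G n),
    gcast G (show (∑ _i : Fin 1, n) = n by simp)
      (γ (k := fun _ : Fin 1 => n) e fun _ => x) = x
  id_γ : ∀ {n : ℕ} (x : G n),
    gcast G (show (∑ _i : Fin n, 1) = n by simp)
      (γ (k := fun _ : Fin n => 1) x fun _ => e) = x
  γ_assoc : ∀ {n : ℕ} {k : Fin n → ℕ} {l : ∀ i : Fin n, Fin (k i) → ℕ}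
      (x : G n) (xs : ∀ i, G (k i)) (ys : ∀ i s, G (l i s)),
    gcast G (flatten_sum_eq k l)
        (γ (k := fun j => l (orderedFinSigmaFinEquiv.symm j).1 (orderedFinSigmaFinEquiv.symm j).2)
          (γ x xs) fun j => ys (orderedFinSigmaFinEquiv.symm j).1 (orderedFinSigmaFinEquiv.symm j).2)
      = γ x fun i => γ (xs i) (ys i)
  π_γ : ∀ {n : ℕ} {k : Fin n → ℕ} (x : G n) (xs : ∀ i, G (k i)),
    π (γ x xs) = blockComp k (π x) fun i => π (xs i)
  interchange : ∀ {n : ℕ} {k : Fin n → ℕ} (x y : G n) (xs ys : ∀ i, G (k i)),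
    γ (x * y) (fun i => xs i * ys i)
      = gcast G (Equiv.sum_comp (π y).symm k)
          (γ (k := fun j => k ((π y).symm j)) x fun j => xs ((π y).symm j))
        * γ y ys

/-- A vector of three natural numbers, as a function on `Fin 3`. -/
def v3 (p q r : ℕ) : Fin 3 → ℕ
  | ⟨0, _⟩ => p
  | ⟨1, _⟩ => q
  | ⟨2, _⟩ => r

/-- A triple of elements of the graded family `G`, indexed over `v3 p q r`. -/
def f3 {G : ℕ → Type} {p q r : ℕ} (a : G p) (b : G q) (c : G r) :
    ∀ i : Fin 3, G (v3 p q r i)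
  | ⟨0, _⟩ => a
  | ⟨1, _⟩ => b
  | ⟨2, _⟩ => c

theorem sum_v3 (p q r : ℕ) : (∑ i, v3 p q r i) = p + q + r := by
  rw [Fin.sum_univ_three]; rfl

/-- A vector of two natural numbers, as a function on `Fin 2`. -/
def v2 (p q : ℕ) : Fin 2 → ℕ
  | ⟨0, _⟩ => p
  | ⟨1, _⟩ => q

/-- A pair of elements of the graded family `G`, indexed over `v2 p q`. -/
def f2 {G : ℕ → Type} {p q : ℕ} (a : G p) (b : G q) :
    ∀ i : Fin 2, G (v2 p q i)
  | ⟨0, _⟩ => a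
  | ⟨1, _⟩ => b

theorem sum_v2 (p q : ℕ) : (∑ i, v2 p q i) = p + q := by
  rw [Fin.sum_univ_two]; rfl

theorem partial_sum_eq {n : ℕ} (k : Fin n → ℕ) (i : Fin n) :
    (∑ j ∈ Finset.univ.filter (fun j => j < i), k j) + k i
      + (∑ j ∈ Finset.univ.filter (fun j => i < j), k j) = ∑ j, k j := by
  classical
  have h2 : Finset.univ.filter (fun j => ¬ j < i)
      = insert i (Finset.univ.filter (fun j => i < j)) := by
    ext j
    simp [not_lt, le_iff_lt_or_eq, or_comm, eq_comm]
  rw [← Finset.sum_filter_add_sum_filter_not Finset.univ (fun j => j < i) k, h2,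
    Finset.sum_insert (by simp)]
  omega

section
variable {G : ℕ → Type} [∀ n, Group (G n)]

theorem gcast_rfl {n : ℕ} (x : G n) : gcast G rfl x = x := rfl

theorem gcast_mul {m n : ℕ} (h : m = n) (x y : G m) :
    gcast G h (x * y) = gcast G h x * gcast G h y := by subst h; rfl

theorem gcast_one {m n : ℕ} (h : m = n) : gcast G h (1 : G m) = 1 := by subst h; rfl

theorem gcast_gcast {m n p : ℕ} (h1 : m = n) (h2 : n = p) (x : G m) :
    gcast G h2 (gcast G h1 x) = gcast G (h1.trans h2) x := by subst h1; subst h2; rfl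

theorem gcast_eq_iff {m n : ℕ} (h : m = n) (x : G m) (y : G n) :
    gcast G h x = y ↔ x = gcast G h.symm y := by subst h; exact Iff.rfl

theorem gcast_eq_one_iff {m n : ℕ} (h : m = n) (x : G m) :
    gcast G h x = 1 ↔ x = 1 := by subst h; exact Iff.rfl

variable (𝒪 : GroupOperad G)

theorem pi_reindex {n : ℕ} {k : Fin n → ℕ} (x : G n) (xs : ∀ i, G (k i))
    (σ : Equiv.Perm (Fin n)) (hσ : σ = 1) (h : (∑ j, k (σ.symm j)) = ∑ i, k i) :
    gcast G h (𝒪.γ (k := fun j => k (σ.symm j)) x (fun j => xs (σ.symm j))) = 𝒪.γ x xs := by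
  subst hσ; rfl

theorem γ_mul_one {n : ℕ} {k : Fin n → ℕ} (x : G n) (xs ys : ∀ i, G (k i)) :
    𝒪.γ x (fun i => xs i * ys i) = 𝒪.γ x xs * 𝒪.γ (1 : G n) ys := by
  have h := 𝒪.interchange x 1 xs ys
  rw [mul_one] at h
  rw [h, pi_reindex 𝒪 x xs (𝒪.π 1) (map_one _)]
end
set_option linter.unusedSectionVars false
section
variable {G : ℕ → Type} [∀ n, Group (G n)] (𝒪 : GroupOperad G)

theorem γ_one_one {n : ℕ} {k : Fin n → ℕ} :
    𝒪.γ (1 : G n) (fun i => (1 : G (k i))) = 1 := by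
  have h := γ_mul_one 𝒪 (1 : G n) (fun i => (1 : G (k i))) (fun i => (1 : G (k i)))
  simp only [mul_one] at h
  exact (mul_left_cancel (a := 𝒪.γ (1 : G n) fun i => (1 : G (k i))) (by rw [← h, mul_one])).symm

theorem e_eq_one : 𝒪.e = (1 : G 1) := by
  have h1 := γ_mul_one 𝒪 (k := fun _ : Fin 1 => 1) 𝒪.e (fun _ => 1) (fun _ => 𝒪.e)
  simp only [one_mul] at h1
  have h2 := 𝒪.γ_id (x := 𝒪.e)
  have h3 := 𝒪.γ_id (x := (1 : G 1))
  have h4 := 𝒪.id_γ (x := (1 : G 1))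
  rw [← h2, h1, gcast_mul, h3, h4, one_mul]
end
set_option linter.unusedSectionVars false

theorem orderedFinSigmaFinEquiv_zero_val {n : ℕ} {k : Fin (n+1) → ℕ} (s : Fin (k 0)) :
    ((orderedFinSigmaFinEquiv ⟨0, s⟩ : Fin _) : ℕ) = s := by
  rfl

theorem orderedFinSigmaFinEquiv_succ_val {n : ℕ} {k : Fin (n+1) → ℕ} (i : Fin n) (s : Fin (k i.succ)) :
    ((orderedFinSigmaFinEquiv ⟨i.succ, s⟩ : Fin _) : ℕ)
      = k 0 + ((orderedFinSigmaFinEquiv (k := fun j => k j.succ)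
          ⟨i, Fin.cast (congrArg k (finSuccEquiv_symm_some i)) s⟩ : Fin _) : ℕ) := by
  rfl

theorem orderedFinSigmaFinEquiv_val : ∀ {n : ℕ} {k : Fin n → ℕ} (x : Σ i : Fin n, Fin (k i)),
    ((orderedFinSigmaFinEquiv x : Fin _) : ℕ)
      = (∑ j ∈ Finset.univ.filter (fun j => j < x.1), k j) + x.2.1
  | 0, k, x => x.1.elim0
  | (n+1), k, ⟨i, s⟩ => by
    induction i using Fin.cases with
    | zero =>
        rw [orderedFinSigmaFinEquiv_zero_val]
        have : Finset.univ.filter (fun j : Fin (n+1) => j < 0) = ∅ := by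
          simp [Finset.filter_eq_empty_iff]
        simp [this]
    | succ i =>
        rw [orderedFinSigmaFinEquiv_succ_val,
          orderedFinSigmaFinEquiv_val (k := fun j => k j.succ) ⟨i, _⟩]
        simp only [Finset.sum_filter]
        rw [Fin.sum_univ_succ (f := fun j : Fin (n+1) => if j < i.succ then k j else 0)]
        simp only [Fin.succ_lt_succ_iff, Fin.succ_pos, if_pos]
        simp [Fin.cast]
        omega
set_option linter.unusedSectionVars false

/-- The block lengths for the 3-ary padding decomposition at index `i`. -/
def lC {n : ℕ} (k : Fin n → ℕ) (i : Fin n) :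
    ∀ t : Fin 3, Fin (v3 i.1 1 (n - 1 - i.1) t) → ℕ
  | ⟨0, _⟩ => fun s => k ⟨s.1, lt_of_lt_of_le s.2 i.isLt.le⟩
  | ⟨1, _⟩ => fun _ => k i
  | ⟨2, _⟩ => fun s => k ⟨i.1 + 1 + s.1, by
      have h2 : s.1 < n - 1 - i.1 := s.2
      have h1 := i.isLt; omega⟩

/-- The inner arguments for the 3-ary padding decomposition. -/
def ysC {G : ℕ → Type} [∀ m, Group (G m)] {n : ℕ} (k : Fin n → ℕ) (i : Fin n) (a : G (k i)) :
    ∀ t : Fin 3, ∀ s : Fin (v3 i.1 1 (n - 1 - i.1) t), G (lC k i t s)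
  | ⟨0, _⟩ => fun _ => 1
  | ⟨1, _⟩ => fun _ => a
  | ⟨2, _⟩ => fun _ => 1

theorem sum_filter_lt {n : ℕ} (k : Fin n → ℕ) (i : Fin n) :
    (∑ s : Fin i.1, k ⟨s.1, lt_of_lt_of_le s.isLt i.isLt.le⟩)
      = ∑ j ∈ Finset.univ.filter (fun j => j < i), k j := by
  refine Finset.sum_bij' (fun s _ => (⟨s.1, lt_of_lt_of_le s.isLt i.isLt.le⟩ : Fin n))
    (fun j hj => ⟨j.1, by simpa only [Finset.mem_filter, Finset.mem_univ, true_and,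
      Fin.lt_def] using hj⟩) ?_ ?_ ?_ ?_ ?_
  · intro s _
    simp only [Finset.mem_filter, Finset.mem_univ, true_and, Fin.lt_def]
    exact s.isLt
  · intro j hj; exact Finset.mem_univ _
  · intro s _; apply Fin.ext; rfl
  · intro j hj; apply Fin.ext; rfl
  · intro s _; rfl

theorem sum_filter_gt {n : ℕ} (k : Fin n → ℕ) (i : Fin n) :
    (∑ s : Fin (n - 1 - i.1), k ⟨i.1 + 1 + s.1, by have := s.isLt; have := i.isLt; omega⟩)
      = ∑ j ∈ Finset.univ.filter (fun j => i < j), k j := by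
  refine Finset.sum_bij'
    (fun s _ => (⟨i.1 + 1 + s.1, by have := s.isLt; have := i.isLt; omega⟩ : Fin n))
    (fun j hj => ⟨j.1 - (i.1 + 1), by
      simp only [Finset.mem_filter, Finset.mem_univ, true_and, Fin.lt_def] at hj
      have := j.isLt; omega⟩) ?_ ?_ ?_ ?_ ?_
  · intro s _
    simp only [Finset.mem_filter, Finset.mem_univ, true_and, Fin.lt_def]
    omega
  · intro j hj; exact Finset.mem_univ _
  · intro s _; apply Fin.ext; simp
  · intro j hj
    simp only [Finset.mem_filter, Finset.mem_univ, true_and, Fin.lt_def] at hj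
    apply Fin.ext; simp; omega
  · intro s _; rfl
section
set_option linter.unusedSectionVars false
variable {G : ℕ → Type} [∀ n, Group (G n)] (𝒪 : GroupOperad G)

theorem γ_congr {n : ℕ} {k k' : Fin n → ℕ} (hk : k = k') (x : G n) (xs : ∀ i, G (k i))
    (hs : (∑ i, k i) = ∑ i, k' i) :
    𝒪.γ x (fun i => gcast G (congrFun hk i) (xs i)) = gcast G hs (𝒪.γ x xs) := by
  subst hk; rfl

theorem γ_reindex_cast {m n' : ℕ} (h : m = n') {κ : Fin m → ℕ} {κ' : Fin n' → ℕ}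
    (hκ : ∀ j : Fin m, κ j = κ' (Fin.cast h j))
    (x : G m) (xs : ∀ j, G (κ j)) (xs' : ∀ j, G (κ' j))
    (hxs : ∀ j : Fin m, gcast G (hκ j) (xs j) = xs' (Fin.cast h j))
    (hsum : (∑ j, κ j) = ∑ j, κ' j) :
    gcast G hsum (𝒪.γ x xs) = 𝒪.γ (gcast G h x) xs' := by
  subst h
  have hk : κ = κ' := funext fun j => hκ j
  subst hk
  have hx : xs = xs' := funext fun j => hxs j
  subst hx; rfl

theorem gcast_sigma {n : ℕ} {K : Fin n → ℕ} {l : ∀ t, Fin (K t) → ℕ}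
    (ys : ∀ t s, G (l t s)) {u v : Σ t, Fin (K t)} (huv : u = v)
    (h : l u.1 u.2 = l v.1 v.2) :
    gcast G h (ys u.1 u.2) = ys v.1 v.2 := by subst huv; rfl

theorem single_apply_eq {n : ℕ} {k : Fin n → ℕ} (i u : Fin n) (a : G (k i)) (h : i = u) :
    Pi.mulSingle (M := fun j => G (k j)) i a u = gcast G (congrArg k h) a := by
  subst h; exact Pi.mulSingle_eq_same (M := fun j => G (k j)) i a
end
section
set_option linter.unusedSectionVars false
variable {G : ℕ → Type} [∀ n, Group (G n)] (𝒪 : GroupOperad G)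

theorem key_single {n : ℕ} {k : Fin n → ℕ} (i : Fin n) (a : G (k i))
    (hBig : (∑ t, v3 (∑ j ∈ Finset.univ.filter (fun j => j < i), k j) (k i)
        (∑ j ∈ Finset.univ.filter (fun j => i < j), k j) t) = ∑ j, k j) :
    𝒪.γ (1 : G n) (Pi.mulSingle (M := fun j => G (k j)) i a)
      = gcast G hBig (𝒪.γ (1 : G 3)
          (f3 (1 : G (∑ j ∈ Finset.univ.filter (fun j => j < i), k j)) a
              (1 : G (∑ j ∈ Finset.univ.filter (fun j => i < j), k j)))) := by
  have hiLt := i.isLt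
  have hM : (∑ t, v3 i.1 1 (n - 1 - i.1) t) = n := by rw [sum_v3]; omega
  have hval : ∀ (t : Fin 3) (s : Fin (v3 i.1 1 (n - 1 - i.1) t)),
      ((orderedFinSigmaFinEquiv (k := v3 i.1 1 (n - 1 - i.1)) ⟨t, s⟩ : Fin _) : ℕ)
        = v3 0 i.1 (i.1 + 1) t + s.1 := by
    intro t s
    rw [orderedFinSigmaFinEquiv_val]
    congr 1
    fin_cases t <;>
      · rw [Finset.sum_filter, Fin.sum_univ_three]
        norm_num [Fin.lt_def]
        try rfl
  have hκ : ∀ j : Fin (∑ t, v3 i.1 1 (n - 1 - i.1) t),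
      lC k i (orderedFinSigmaFinEquiv.symm j).1 (orderedFinSigmaFinEquiv.symm j).2 = k (Fin.cast hM j) := by
    intro j
    obtain ⟨⟨t, s⟩, hx⟩ : ∃ x, orderedFinSigmaFinEquiv.symm j = x := ⟨_, rfl⟩
    have hj : j = orderedFinSigmaFinEquiv ⟨t, s⟩ := by rw [← hx, Equiv.apply_symm_apply]
    have hvj : (j : ℕ) = v3 0 i.1 (i.1 + 1) t + s.1 := by rw [hj]; exact hval t s
    rw [hx]
    fin_cases t
    · have hv : (j : ℕ) = 0 + s.1 := hvj
      exact congrArg k (Fin.ext (by simp only [Fin.coe_cast, hv]; omega))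
    · have hv : (j : ℕ) = i.1 + s.1 := hvj
      have hs : s.1 < 1 := s.isLt
      exact congrArg k (Fin.ext (by simp only [Fin.coe_cast, hv]; omega))
    · have hv : (j : ℕ) = i.1 + 1 + s.1 := hvj
      exact congrArg k (Fin.ext (by simp only [Fin.coe_cast, hv]; try omega))
  have hxs : ∀ j : Fin (∑ t, v3 i.1 1 (n - 1 - i.1) t),
      gcast G (hκ j) (ysC k i a (orderedFinSigmaFinEquiv.symm j).1 (orderedFinSigmaFinEquiv.symm j).2)
        = Pi.mulSingle (M := fun j => G (k j)) i a (Fin.cast hM j) := by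
    intro j
    obtain ⟨⟨t, s⟩, hx⟩ : ∃ x, orderedFinSigmaFinEquiv.symm j = x := ⟨_, rfl⟩
    have hj : j = orderedFinSigmaFinEquiv ⟨t, s⟩ := by rw [← hx, Equiv.apply_symm_apply]
    have hvj : (j : ℕ) = v3 0 i.1 (i.1 + 1) t + s.1 := by rw [hj]; exact hval t s
    have hsig := gcast_sigma (ysC k i a) hx (by rw [hx])
    rw [(gcast_eq_iff _ _ _).1 hsig, gcast_gcast]
    fin_cases t
    · have hv : (j : ℕ) = 0 + s.1 := hvj
      have hs : s.1 < i.1 := s.isLt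
      have hne : Fin.cast hM j ≠ i := by
        refine Fin.ne_of_val_ne ?_
        simp only [Fin.coe_cast, hv]
        omega
      exact Eq.trans ((gcast_eq_one_iff _ _).2 rfl) (Pi.mulSingle_eq_of_ne (M := fun j => G (k j)) hne a).symm
    · have hv : (j : ℕ) = i.1 + s.1 := hvj
      have hs : s.1 < 1 := s.isLt
      have hceq : i = Fin.cast hM j := Fin.ext (by simp only [Fin.coe_cast, hv]; omega)
      rw [single_apply_eq i (Fin.cast hM j) a hceq]
      rfl
    · have hv : (j : ℕ) = i.1 + 1 + s.1 := hvj
      have hne : Fin.cast hM j ≠ i := by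
        refine Fin.ne_of_val_ne ?_
        simp only [Fin.coe_cast, hv]
        omega
      exact Eq.trans ((gcast_eq_one_iff _ _).2 rfl) (Pi.mulSingle_eq_of_ne (M := fun j => G (k j)) hne a).symm
  have hsum : (∑ j, lC k i (orderedFinSigmaFinEquiv.symm j).1 (orderedFinSigmaFinEquiv.symm j).2)
      = ∑ j, k j :=
    Fintype.sum_equiv (finCongr hM) _ _ (fun j => hκ j)
  have hxs1 : f3 (1 : G i.1) (1 : G 1) (1 : G (n - 1 - i.1))
      = fun t => (1 : G (v3 i.1 1 (n - 1 - i.1) t)) := by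
    funext t; fin_cases t <;> rfl
  have hinner : 𝒪.γ (1 : G 3) (f3 (1 : G i.1) (1 : G 1) (1 : G (n - 1 - i.1))) = 1 := by
    rw [hxs1]; exact γ_one_one 𝒪
  have main := γ_reindex_cast 𝒪 hM hκ
      (𝒪.γ (1 : G 3) (f3 (1 : G i.1) (1 : G 1) (1 : G (n - 1 - i.1))))
      (fun j => ysC k i a (orderedFinSigmaFinEquiv.symm j).1 (orderedFinSigmaFinEquiv.symm j).2)
      (Pi.mulSingle i a) hxs hsum
  have assoc := 𝒪.γ_assoc (1 : G 3) (f3 (1 : G i.1) (1 : G 1) (1 : G (n - 1 - i.1)))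
      (ysC k i a)
  rw [(gcast_eq_iff _ _ _).1 assoc, gcast_gcast] at main
  rw [hinner, gcast_one] at main
  have hKvec : (fun t : Fin 3 => ∑ s, lC k i t s)
      = v3 (∑ j ∈ Finset.univ.filter (fun j => j < i), k j) (k i)
          (∑ j ∈ Finset.univ.filter (fun j => i < j), k j) := by
    funext t; fin_cases t
    · exact sum_filter_lt k i
    · exact Fin.sum_univ_one (fun _ => k i)
    · exact sum_filter_gt k i
  have entries : (fun t => gcast G (congrFun hKvec t)
        ((fun t => 𝒪.γ (f3 (1 : G i.1) (1 : G 1) (1 : G (n - 1 - i.1)) t) (ysC k i a t)) t))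
      = f3 (1 : G (∑ j ∈ Finset.univ.filter (fun j => j < i), k j)) a
          (1 : G (∑ j ∈ Finset.univ.filter (fun j => i < j), k j)) := by
    funext t; fin_cases t
    · exact (gcast_eq_one_iff _ _).2 (γ_one_one 𝒪)
    · have h2 := 𝒪.γ_id (x := a); rw [e_eq_one] at h2
      exact h2
    · exact (gcast_eq_one_iff _ _).2 (γ_one_one 𝒪)
  have hc := γ_congr 𝒪 hKvec (1 : G 3)
      (fun t => 𝒪.γ (f3 (1 : G i.1) (1 : G 1) (1 : G (n - 1 - i.1)) t) (ysC k i a t))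
      (by rw [hKvec])
  rw [entries] at hc
  rw [(gcast_eq_iff _ _ _).1 hc.symm, gcast_gcast] at main
  exact main.symm
end
section
set_option linter.unusedSectionVars false
variable {G H : ℕ → Type} [∀ n, Group (G n)] [∀ n, Group (H n)]
  (𝒢 : GroupOperad G) (ℋ : GroupOperad H) (f : ∀ n, G n →* H n)

theorem f_gcast {m n : ℕ} (h : m = n) (x : G m) :
    f n (gcast G h x) = gcast H h (f m x) := by subst h; rfl

theorem f_single
    (hb : ∀ (p q m : ℕ) (x : G m),
      f _ (𝒢.γ (1 : G 3) (f3 (1 : G p) x (1 : G q)))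
        = ℋ.γ (1 : H 3) (f3 (1 : H p) (f m x) (1 : H q)))
    {n : ℕ} {k : Fin n → ℕ} (i : Fin n) (a : G (k i)) :
    f _ (𝒢.γ (1 : G n) (Pi.mulSingle (M := fun j => G (k j)) i a))
      = ℋ.γ (1 : H n) (Pi.mulSingle (M := fun j => H (k j)) i (f (k i) a)) := by
  have hBig : (∑ t, v3 (∑ j ∈ Finset.univ.filter (fun j => j < i), k j) (k i)
      (∑ j ∈ Finset.univ.filter (fun j => i < j), k j) t) = ∑ j, k j := by
    rw [sum_v3]; exact partial_sum_eq k i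
  rw [key_single 𝒢 i a hBig, f_gcast, hb, ← key_single ℋ i (f (k i) a) hBig]

theorem f_γ_one
    (hb : ∀ (p q m : ℕ) (x : G m),
      f _ (𝒢.γ (1 : G 3) (f3 (1 : G p) x (1 : G q)))
        = ℋ.γ (1 : H 3) (f3 (1 : H p) (f m x) (1 : H q)))
    {n : ℕ} {k : Fin n → ℕ} (m : ℕ) (xs : ∀ i, G (k i))
    (hxs : ∀ j : Fin n, m ≤ (j : ℕ) → xs j = 1) :
    f _ (𝒢.γ (1 : G n) xs) = ℋ.γ (1 : H n) (fun i => f (k i) (xs i)) := by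
  induction m generalizing xs with
  | zero =>
      have hx : xs = fun i => 1 := funext fun j => hxs j (Nat.zero_le _)
      subst hx
      rw [γ_one_one 𝒢, map_one]
      have h1 : (fun i => f (k i) (1 : G (k i))) = fun i => (1 : H (k i)) :=
        funext fun i => map_one _
      rw [h1, γ_one_one ℋ]
  | succ m ih =>
      by_cases hmn : m < n
      · set i : Fin n := ⟨m, hmn⟩ with hi
        have hdecomp : xs = fun j => Function.update xs i 1 j
            * Pi.mulSingle (M := fun j => G (k j)) i (xs i) j := by
          funext j
          rcases eq_or_ne j i with rfl | hne
          · simp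
          · simp [Function.update_of_ne hne, Pi.mulSingle_eq_of_ne hne]
        have h1 : 𝒢.γ (1 : G n) xs = 𝒢.γ 1 (Function.update xs i 1)
            * 𝒢.γ 1 (Pi.mulSingle (M := fun j => G (k j)) i (xs i)) := by
          conv_lhs => rw [hdecomp]
          exact γ_mul_one 𝒢 _ _ _
        have hu : ∀ j : Fin n, m ≤ (j : ℕ) → Function.update xs i 1 j = 1 := by
          intro j hj
          rcases eq_or_ne j i with rfl | hne
          · simp
          · rw [Function.update_of_ne hne]
            refine hxs j ?_
            have : (j : ℕ) ≠ m := fun hc => hne (Fin.ext hc)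
            omega
        have h2 : (fun j => f (k j) (xs j))
            = fun j => (fun j' => f (k j') (Function.update xs i 1 j')) j
              * Pi.mulSingle (M := fun j => H (k j)) i (f (k i) (xs i)) j := by
          funext j
          rcases eq_or_ne j i with rfl | hne
          · simp
          · simp [Function.update_of_ne hne, Pi.mulSingle_eq_of_ne hne]
        have h3 : ℋ.γ (1 : H n) (fun j => f (k j) (xs j))
            = ℋ.γ 1 (fun j => f (k j) (Function.update xs i 1 j))
              * ℋ.γ 1 (Pi.mulSingle (M := fun j => H (k j)) i (f (k i) (xs i))) := by
          conv_lhs => rw [h2]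
          exact γ_mul_one ℋ _ _ _
        rw [h1, map_mul, ih (Function.update xs i 1) hu, f_single 𝒢 ℋ f hb i (xs i), h3]
      · exact ih xs (fun j _ => hxs j (by have := j.isLt; omega)) 
end
/-- Full faithfulness criterion: a levelwise group homomorphism between group
operads which preserves compositions with units and paddings preserves all
operadic compositions. -/
theorem groupOperad_hom_of_units_and_pads
    (G H : ℕ → Type) [∀ n, Group (G n)] [∀ n, Group (H n)]
    (𝒢 : GroupOperad G) (ℋ : GroupOperad H)
    (f : ∀ n, G n →* H n)
    (ha : ∀ {n : ℕ} {k : Fin n → ℕ} (x : G n),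
      f _ (𝒢.γ x (fun i => (1 : G (k i))))
        = ℋ.γ (f n x) (fun i => (1 : H (k i))))
    (hb : ∀ (p q m : ℕ) (x : G m),
      f _ (𝒢.γ (1 : G 3) (f3 (1 : G p) x (1 : G q)))
        = ℋ.γ (1 : H 3) (f3 (1 : H p) (f m x) (1 : H q))) :
    ∀ {n : ℕ} {k : Fin n → ℕ} (x : G n) (xs : ∀ i, G (k i)),
      f _ (𝒢.γ x xs) = ℋ.γ (f n x) (fun i => f (k i) (xs i)) := by

  intro n k x xs
  have h1 : 𝒢.γ x xs = 𝒢.γ x (fun i => (1 : G (k i))) * 𝒢.γ 1 xs := by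
    have h := γ_mul_one 𝒢 x (fun i => (1 : G (k i))) xs
    simpa using h
  have h2 : ℋ.γ (f n x) (fun i => f (k i) (xs i))
      = ℋ.γ (f n x) (fun i => (1 : H (k i)))
        * ℋ.γ 1 (fun i => f (k i) (xs i)) := by
    have h := γ_mul_one ℋ (f n x) (fun i => (1 : H (k i))) (fun i => f (k i) (xs i))
    simpa using h
  rw [h1, map_mul, ha x,
    f_γ_one 𝒢 ℋ f hb n xs (fun j _ => absurd j.isLt (by omega)), h2]
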